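/- Let p ∈ (0,1) and define φ_p(x) = (1+x)^{-p/2} for x ≥ 0, and Φ_p(x) = φ_p(x) for x ≥ 1, Φ_p(x) = 2φ_p(1) − φ_p(2−x) for 0 ≤ x ≤ 1. Then for all a, b ≥ 0 with (a+b)/2 ≤ 1, (Φ_p(a)+Φ_p(b))/2 ≤ Φ_p((a+b)/2). -/

import Mathlib

noncomputable def phi (p x : ℝ) : ℝ := (1 + x) ^ (-p / 2)

noncomputable def Phi (p x : ℝ) : ℝ :=
  if 1 ≤ x then phi p x else 2 * phi p 1 - phi p (2 - x)

/-!
`Φ_p` is the point reflection of the convex function `φ_p` through `(1, φ_p(1))`, so it is concave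
on `(-∞, 1]`, which settles the case `a, b ≤ 1`. If `a < 1 < b`, replacing the pair `(a, b)` by
`(a + b - 1, 1)` keeps the midpoint and does not decrease `Φ_p(a) + Φ_p(b)`: after unfolding `Φ_p`
this is `φ_p(b) + φ_p(3 - a - b) ≤ φ_p(1) + φ_p(2 - a)`, where both sides have the same sum of
arguments and the left-hand ones lie between the right-hand ones, which is convexity of `φ_p`.
-/

open Real Set

section ConvexPair

variable {𝕜 : Type*} [Field 𝕜] [LinearOrder 𝕜] [IsStrictOrderedRing 𝕜] {s : Set 𝕜} {f : 𝕜 → 𝕜}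

theorem ConvexOn.map_add_map_le_of_mem_Icc (hf : ConvexOn 𝕜 s f) {x y u v : 𝕜} (hx : x ∈ s)
    (hy : y ∈ s) (hu : u ∈ Icc x y) (hv : v ∈ Icc x y) (huv : u + v = x + y) :
    f u + f v ≤ f x + f y := by
  rcases (hu.1.trans hu.2).eq_or_lt with rfl | hxy
  · obtain rfl : u = x := le_antisymm hu.2 hu.1
    obtain rfl : v = u := le_antisymm hv.2 hv.1
    rfl
  have hyx : 0 < y - x := sub_pos.2 hxy
  have chord : ∀ w ∈ Icc x y, f w ≤ (y - w) / (y - x) * f x + (w - x) / (y - x) * f y := by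
    intro w hw
    have h := hf.2 hx hy (div_nonneg (sub_nonneg.2 hw.2) hyx.le)
      (div_nonneg (sub_nonneg.2 hw.1) hyx.le) (by field_simp; ring)
    simp only [smul_eq_mul] at h
    convert h using 2
    field_simp
    ring
  calc f u + f v
      ≤ ((y - u) / (y - x) * f x + (u - x) / (y - x) * f y)
        + ((y - v) / (y - x) * f x + (v - x) / (y - x) * f y) :=
        add_le_add (chord u hu) (chord v hv)
    _ = f x + f y := by
        obtain rfl : v = x + y - u := by linear_combination huv
        field_simp
        ring

end ConvexPair

theorem convexOn_rpow_of_nonpos {q : ℝ} (hq : q ≤ 0) : ConvexOn ℝ (Ioi 0) fun x : ℝ ↦ x ^ q := by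
  have hanti : Antitone fun t : ℝ ↦ exp q ^ t := fun _ _ hst ↦
    rpow_le_rpow_of_exponent_ge (exp_pos q) (exp_le_one_iff.2 hq) hst
  have himage : log '' Ioi 0 = univ := eq_univ_of_forall fun t ↦ ⟨exp t, exp_pos t, log_exp t⟩
  have hcomp := (himage ▸ convexOn_rpow_left (exp_pos q)).comp_concaveOn
    strictConcaveOn_log_Ioi.concaveOn (hanti.antitoneOn _)
  refine hcomp.congr fun x hx ↦ ?_
  simp only [Function.comp, rpow_def_of_pos (exp_pos q), rpow_def_of_pos (mem_Ioi.1 hx), log_exp,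
    mul_comm]

theorem convexOn_phi {p : ℝ} (hp : 0 ≤ p) : ConvexOn ℝ (Ioi (-1)) (phi p) := by
  have h := (convexOn_rpow_of_nonpos (q := -p / 2) (by linarith)).translate_right 1
  have hdom : (fun z : ℝ ↦ 1 + z) ⁻¹' Ioi 0 = Ioi (-1) := by
    ext z; simp only [mem_preimage, mem_Ioi]; constructor <;> intro <;> linarith
  rwa [hdom] at h

theorem Phi_of_one_le {p x : ℝ} (hx : 1 ≤ x) : Phi p x = phi p x := if_pos hx

theorem Phi_of_le_one {p x : ℝ} (hx : x ≤ 1) : Phi p x = 2 * phi p 1 - phi p (2 - x) := by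
  rcases hx.eq_or_lt with rfl | hx
  · rw [Phi_of_one_le le_rfl, show (2:ℝ) - 1 = 1 by norm_num]; ring
  · exact if_neg hx.not_ge

theorem concaveOn_Phi {p : ℝ} (hp : 0 ≤ p) : ConcaveOn ℝ (Iic 1) (Phi p) := by
  refine ⟨convex_Iic 1, fun x hx y hy s t hs ht hst ↦ ?_⟩
  have hmem : s • x + t • y ≤ 1 := convex_Iic 1 hx hy hs ht hst
  have h := (convexOn_phi hp).2 (x := 2 - x) (y := 2 - y)
    (mem_Ioi.2 (by linarith [mem_Iic.1 hx])) (mem_Ioi.2 (by linarith [mem_Iic.1 hy])) hs ht hst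
  rw [Phi_of_le_one hx, Phi_of_le_one hy, Phi_of_le_one hmem]
  simp only [smul_eq_mul] at h ⊢
  have harg : s * (2 - x) + t * (2 - y) = 2 - (s * x + t * y) := by linear_combination 2 * hst
  rw [harg] at h
  linear_combination h + (2 * phi p 1) * hst

theorem Phi_add_Phi_le_of_le_one {p x y : ℝ} (hp : 0 ≤ p) (hx : x ≤ 1) (hy : y ≤ 1) :
    Phi p x + Phi p y ≤ 2 * Phi p ((x + y) / 2) := by
  have h := (concaveOn_Phi hp).2 hx hy (by norm_num : (0 : ℝ) ≤ 1 / 2)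
    (by norm_num : (0 : ℝ) ≤ 1 / 2) (by norm_num)
  simp only [smul_eq_mul] at h
  rw [show 1 / 2 * x + 1 / 2 * y = (x + y) / 2 by ring] at h
  linarith

theorem Phi_add_Phi_le_of_le_one_le {p x y : ℝ} (hp : 0 ≤ p) (hx : x ≤ 1) (hy : 1 ≤ y)
    (hxy : x + y ≤ 2) : Phi p x + Phi p y ≤ Phi p (x + y - 1) + Phi p 1 := by
  rw [Phi_of_le_one hx, Phi_of_one_le hy, Phi_of_le_one (by linarith), Phi_of_one_le le_rfl]
  have h := (convexOn_phi hp).map_add_map_le_of_mem_Icc (x := 1) (y := 2 - x) (u := y)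
    (v := 2 - (x + y - 1)) (by norm_num) (by simp only [mem_Ioi]; linarith)
    ⟨hy, by linarith⟩ ⟨by linarith, by linarith⟩ (by ring)
  linarith

theorem Phi_midpoint_concave {p : ℝ} (hp : p ∈ Set.Ioo (0:ℝ) 1)
    {a b : ℝ} (hab : (a + b) / 2 ≤ 1) :
    (Phi p a + Phi p b) / 2 ≤ Phi p ((a + b) / 2) := by
  wlog hle : a ≤ b generalizing a b
  · rw [add_comm a b] at hab
    rw [add_comm a b, add_comm (Phi p a)]
    exact this hab (le_of_not_ge hle)
  have hp0 : 0 ≤ p := hp.1.le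
  rcases le_or_gt b 1 with hb | hb
  · linarith [Phi_add_Phi_le_of_le_one hp0 (hle.trans hb) hb]
  · have hreflect := Phi_add_Phi_le_of_le_one_le hp0 (x := a) (y := b) (by linarith) hb.le
      (by linarith)
    have hconc := Phi_add_Phi_le_of_le_one hp0 (x := a + b - 1) (y := 1) (by linarith) le_rfl
    rw [show (a + b - 1 + 1) / 2 = (a + b) / 2 by ring] at hconc
    linarith
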